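/- Let F = f + g where ∇f is coordinate-wise L-Lipschitz, g(x) = Σ_i g_i(x_i) is separable with each g_i convex, F attains its minimum F*, and F satisfies the proximal-PL inequality (1/2)D_g(x, L) ≥ μ(F(x) − F*). Then randomized proximal coordinate descent, which picks i_k uniformly at random and sets x_{k+1} = x_k + t* e_{i_k} with t* = argmin_t [t ∇_{i_k} f(x_k) + (L/2)t² + g_{i_k}((x_k)_{i_k} + t) − g_{i_k}((x_k)_{i_k})], satisfies E[F(x_k) − F*] ≤ (1 − μ/(dL))^k (F(x_0) − F*). -/

import Mathlib

/-!
By separability of `g`, the model `⟪∇f x, y - x⟫ + L/2 ‖y - x‖² + g y - g x` minimised in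
`D_g(x, L)` is a sum of one-dimensional models, one per coordinate, so the sum over `i` of the minimal
coordinate decreases is at most the full proximal decrease `-D_g(x, L) / (2L)`. Combined with the
coordinate-wise Lipschitz bound and the proximal-PL inequality, averaging over the `d` choices of
coordinate contracts the optimality gap by `1 - μ / (d L)`. Summing over all coordinate paths and
iterating gives the geometric rate.
-/

open RealInnerProductSpace

/-- The quantity `D_g(x, λ)` from the proximal-PL inequality. -/
noncomputable def Dg {d : ℕ} (f g : EuclideanSpace ℝ (Fin d) → ℝ)
    (x : EuclideanSpace ℝ (Fin d)) (lam : ℝ) : ℝ :=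
  -2 * lam * ⨅ y : EuclideanSpace ℝ (Fin d),
    (⟪gradient f x, y - x⟫ + lam / 2 * ‖y - x‖ ^ 2 + g y - g x)

theorem le_geom_of_nonneg {a : ℕ → ℝ} {r : ℝ} (ha : ∀ k, 0 ≤ a k)
    (h : ∀ k, a (k + 1) ≤ r * a k) (k : ℕ) : a k ≤ r ^ k * a 0 := by
  rcases le_or_gt 0 r with hr | hr
  · exact le_geom hr k fun j _ => h j
  · -- `0 ≤ a 1 ≤ r * a 0 ≤ 0` forces `a 0 = 0`, and then every `a k` vanishes.
    have ha0 : a 0 = 0 := by nlinarith [h 0, ha 0, ha 1]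
    have hzero : ∀ k, a k = 0 := by
      intro k
      induction k with
      | zero => exact ha0
      | succ k ih => exact le_antisymm (by simpa [ih] using h k) (ha _)
    simp [hzero]

noncomputable def proxModel {ι : Type*} [Fintype ι] (v x : EuclideanSpace ℝ ι) (L : ℝ)
    (g : EuclideanSpace ℝ ι → ℝ) (y : EuclideanSpace ℝ ι) : ℝ :=
  ⟪v, y - x⟫ + L / 2 * ‖y - x‖ ^ 2 + g y - g x

noncomputable def coordModel (a L : ℝ) (h : ℝ → ℝ) (u s : ℝ) : ℝ :=
  s * a + L / 2 * s ^ 2 + h (u + s) - h u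

theorem proxModel_eq_sum_coordModel {ι : Type*} [Fintype ι] (v x y : EuclideanSpace ℝ ι)
    (L : ℝ) {g : EuclideanSpace ℝ ι → ℝ} {gi : ι → ℝ → ℝ} (hg : ∀ x, g x = ∑ i, gi i (x i)) :
    proxModel v x L g y = ∑ i, coordModel (v i) L (gi i) (x i) (y i - x i) := by
  simp only [proxModel, coordModel, PiLp.inner_apply, EuclideanSpace.real_norm_sq_eq, hg,
    RCLike.inner_apply, conj_trivial, PiLp.sub_apply, add_sub_cancel, Finset.mul_sum,
    ← Finset.sum_add_distrib, ← Finset.sum_sub_distrib]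

theorem sum_coordModel_le_iInf_proxModel {ι : Type*} [Fintype ι] (v x : EuclideanSpace ℝ ι)
    (L : ℝ) {g : EuclideanSpace ℝ ι → ℝ} {gi : ι → ℝ → ℝ} (hg : ∀ x, g x = ∑ i, gi i (x i))
    {t : ι → ℝ} (ht : ∀ i, IsMinOn (coordModel (v i) L (gi i) (x i)) Set.univ (t i)) :
    ∑ i, coordModel (v i) L (gi i) (x i) (t i) ≤ ⨅ y, proxModel v x L g y :=
  le_ciInf fun y => by
    rw [proxModel_eq_sum_coordModel v x y L hg]
    exact Finset.sum_le_sum fun i _ => ht i (Set.mem_univ _)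

theorem sum_coordModel_le_of_proxPL {d : ℕ} {f g : EuclideanSpace ℝ (Fin d) → ℝ}
    {gi : Fin d → ℝ → ℝ} (hg : ∀ x, g x = ∑ i, gi i (x i)) {L μ Fstar : ℝ} (hL : 0 < L)
    {x : EuclideanSpace ℝ (Fin d)} (hPL : μ * (f x + g x - Fstar) ≤ 1 / 2 * Dg f g x L)
    {t : Fin d → ℝ}
    (ht : ∀ i, IsMinOn (coordModel (gradient f x i) L (gi i) (x i)) Set.univ (t i)) :
    ∑ i, coordModel (gradient f x i) L (gi i) (x i) (t i) ≤ -(μ / L) * (f x + g x - Fstar) := by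
  have hinf := mul_le_mul_of_nonneg_left
    (sum_coordModel_le_iInf_proxModel (gradient f x) x L hg ht) hL.le
  unfold proxModel at hinf
  unfold Dg at hPL
  rw [neg_mul, div_mul_eq_mul_div, le_neg, div_le_iff₀ hL]
  linarith

theorem sum_coord_step_sub_le {d : ℕ} {f g : EuclideanSpace ℝ (Fin d) → ℝ}
    {gi : Fin d → ℝ → ℝ} (hg : ∀ x, g x = ∑ i, gi i (x i)) {L μ Fstar : ℝ} (hL : 0 < L)
    {x : EuclideanSpace ℝ (Fin d)}
    (hlip : ∀ i t, f (x + t • EuclideanSpace.single i 1) + g (x + t • EuclideanSpace.single i 1)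
      - (f x + g x) ≤ coordModel (gradient f x i) L (gi i) (x i) t)
    (hPL : μ * (f x + g x - Fstar) ≤ 1 / 2 * Dg f g x L) {t : Fin d → ℝ}
    (ht : ∀ i, IsMinOn (coordModel (gradient f x i) L (gi i) (x i)) Set.univ (t i)) :
    ∑ i, (f (x + t i • EuclideanSpace.single i 1) + g (x + t i • EuclideanSpace.single i 1) - Fstar)
      ≤ (d - μ / L) * (f x + g x - Fstar) :=
  calc _ ≤ ∑ i, (coordModel (gradient f x i) L (gi i) (x i) (t i) + (f x + g x - Fstar)) :=
        Finset.sum_le_sum fun i _ => by linarith [hlip i (t i)]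
    _ = ∑ i, coordModel (gradient f x i) L (gi i) (x i) (t i) + d * (f x + g x - Fstar) := by
        rw [Finset.sum_add_distrib, Finset.sum_const, Finset.card_univ, Fintype.card_fin,
          nsmul_eq_mul]
    _ ≤ (d - μ / L) * (f x + g x - Fstar) := by
        linarith [sum_coordModel_le_of_proxPL hg hL hPL ht]

theorem sum_pi_fin_succ_eq_sum_snoc {α M : Type*} [Fintype α] [AddCommMonoid M] {k : ℕ}
    (φ : (Fin (k + 1) → α) → M) :
    ∑ ω, φ ω = ∑ ω : Fin k → α, ∑ i, φ (Fin.snoc ω i) := by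
  rw [← Fintype.sum_equiv (Fin.snocEquiv fun _ => α) _ φ fun _ => rfl, Fintype.sum_prod_type,
    Finset.sum_comm]
  rfl

theorem randomized_proximal_coordinate_descent_proxPL_general
    {d : ℕ} (hd : 0 < d)
    (f g : EuclideanSpace ℝ (Fin d) → ℝ) (gi : Fin d → ℝ → ℝ)
    (L μ Fstar : ℝ) (hL : 0 < L)
    (hgsep : ∀ x, g x = ∑ i, gi i (x i))
    (hlip : ∀ (x : EuclideanSpace ℝ (Fin d)) (i : Fin d) (t : ℝ),
      (f (x + t • EuclideanSpace.single i (1 : ℝ)) + g (x + t • EuclideanSpace.single i (1 : ℝ)))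
          - (f x + g x)
        ≤ t * gradient f x i + L / 2 * t ^ 2 + gi i (x i + t) - gi i (x i))
    (hmin : ∃ z, f z + g z = Fstar ∧ ∀ y, Fstar ≤ f y + g y)
    (hproxPL : ∀ x, μ * (f x + g x - Fstar) ≤ 1 / 2 * Dg f g x L)
    (x0 : EuclideanSpace ℝ (Fin d))
    (X : ∀ k : ℕ, (Fin k → Fin d) → EuclideanSpace ℝ (Fin d))
    (hX0 : ∀ ω, X 0 ω = x0)
    (hXs : ∀ (k : ℕ) (ω : Fin (k + 1) → Fin d),
      ∃ t : ℝ,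
        IsMinOn (fun s : ℝ =>
            s * gradient f (X k (ω ∘ Fin.castSucc)) (ω (Fin.last k)) + L / 2 * s ^ 2
              + gi (ω (Fin.last k)) ((X k (ω ∘ Fin.castSucc)) (ω (Fin.last k)) + s)
              - gi (ω (Fin.last k)) ((X k (ω ∘ Fin.castSucc)) (ω (Fin.last k))))
          Set.univ t
        ∧ X (k + 1) ω = X k (ω ∘ Fin.castSucc)
            + t • EuclideanSpace.single (ω (Fin.last k)) (1 : ℝ)) :
    ∀ k : ℕ,
      (∑ ω : Fin k → Fin d, (f (X k ω) + g (X k ω) - Fstar)) / (d : ℝ) ^ k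
        ≤ (1 - μ / (d * L)) ^ k * (f x0 + g x0 - Fstar) := by
  obtain ⟨-, -, hFstar⟩ := hmin
  set S : ℕ → ℝ := fun k => ∑ ω : Fin k → Fin d, (f (X k ω) + g (X k ω) - Fstar) with hS
  have hstep : ∀ k, S (k + 1) ≤ (d - μ / L) * S k := by
    intro k
    simp only [hS, sum_pi_fin_succ_eq_sum_snoc, Finset.mul_sum]
    refine Finset.sum_le_sum fun ω _ => ?_
    choose t ht hXt using fun i => hXs k (Fin.snoc ω i)
    simp only [Fin.snoc_comp_castSucc, Fin.snoc_last] at ht hXt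
    simp only [hXt]
    exact sum_coord_step_sub_le hgsep hL (hlip _) (hproxPL _) ht
  have hS_nonneg : ∀ k, 0 ≤ S k := fun k =>
    Finset.sum_nonneg fun ω _ => sub_nonneg.2 (hFstar _)
  have hS0 : S 0 = f x0 + g x0 - Fstar := by simp [hS, hX0]
  intro k
  rw [div_le_iff₀ (pow_pos (Nat.cast_pos.2 hd) k), ← hS0]
  calc S k ≤ (d - μ / L) ^ k * S 0 := le_geom_of_nonneg hS_nonneg hstep k
    _ = (1 - μ / (d * L)) ^ k * S 0 * d ^ k := by
      rw [show (d : ℝ) - μ / L = (1 - μ / (d * L)) * d by field_simp, mul_pow]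
      ring

theorem randomized_proximal_coordinate_descent_proxPL
    {d : ℕ} (hd : 0 < d)
    (f g : EuclideanSpace ℝ (Fin d) → ℝ) (gi : Fin d → ℝ → ℝ)
    (L μ Fstar : ℝ) (hL : 0 < L) (hμ : 0 < μ)
    (hdiff : Differentiable ℝ f)
    (hgsep : ∀ x, g x = ∑ i, gi i (x i))
    (hgiconv : ∀ i, ConvexOn ℝ Set.univ (gi i))
    (hlip : ∀ (x : EuclideanSpace ℝ (Fin d)) (i : Fin d) (t : ℝ),
      (f (x + t • EuclideanSpace.single i (1 : ℝ)) + g (x + t • EuclideanSpace.single i (1 : ℝ)))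
          - (f x + g x)
        ≤ t * gradient f x i + L / 2 * t ^ 2 + gi i (x i + t) - gi i (x i))
    (hmin : ∃ z, f z + g z = Fstar ∧ ∀ y, Fstar ≤ f y + g y)
    (hproxPL : ∀ x, μ * (f x + g x - Fstar) ≤ 1 / 2 * Dg f g x L)
    (x0 : EuclideanSpace ℝ (Fin d))
    (X : ∀ k : ℕ, (Fin k → Fin d) → EuclideanSpace ℝ (Fin d))
    (hX0 : ∀ ω, X 0 ω = x0)
    (hXs : ∀ (k : ℕ) (ω : Fin (k + 1) → Fin d),
      ∃ t : ℝ,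
        IsMinOn (fun s : ℝ =>
            s * gradient f (X k (ω ∘ Fin.castSucc)) (ω (Fin.last k)) + L / 2 * s ^ 2
              + gi (ω (Fin.last k)) ((X k (ω ∘ Fin.castSucc)) (ω (Fin.last k)) + s)
              - gi (ω (Fin.last k)) ((X k (ω ∘ Fin.castSucc)) (ω (Fin.last k))))
          Set.univ t
        ∧ X (k + 1) ω = X k (ω ∘ Fin.castSucc)
            + t • EuclideanSpace.single (ω (Fin.last k)) (1 : ℝ)) :
    ∀ k : ℕ,
      (∑ ω : Fin k → Fin d, (f (X k ω) + g (X k ω) - Fstar)) / (d : ℝ) ^ k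
        ≤ (1 - μ / (d * L)) ^ k * (f x0 + g x0 - Fstar) :=
  randomized_proximal_coordinate_descent_proxPL_general hd f g gi L μ Fstar hL hgsep hlip hmin
    hproxPL x0 X hX0 hXs
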